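/- arXiv:2409.12013 — 2 statements merged into one kernel-verified Lean document; each statement's English description precedes it below -/
import Mathlib

section
/- If M is weaker than B and a transformation-effect tr : P ↦ P' is unsafe under M but safe under B, then there exists an execution E' ∈ ⟦P'⟧_M such that E' is inconsistent under B, and every execution E ∈ ⟨P⟩ with E ∼ E' is inconsistent under M (and hence under B). -/
/-- An execution is consistent with a memory model (a set of consistency
rules) if every rule holds on it. -/
def consistent {Exec : Type} (M : Set (Exec → Prop)) (E : Exec) : Prop :=
  ∀ a ∈ M, a E

/-- `A ⊑ B`: every execution of `A` has a comparable execution in `B`. -/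
def contained {Exec : Type} (sim : Exec → Exec → Prop) (A B : Set Exec) : Prop :=
  ∀ E' ∈ A, ∃ E ∈ B, sim E' E

/-- A transformation-effect `tr : P ↦ P'` is safe under `M` if the
`M`-consistent candidate executions of `P'` are contained in those of `P`. -/
def safeU {Exec PreTrace : Type} (cand : PreTrace → Set Exec)
    (sim : Exec → Exec → Prop) (M : Set (Exec → Prop)) (P P' : PreTrace) : Prop :=
  contained sim {E ∈ cand P' | consistent M E} {E ∈ cand P | consistent M E}

/-- If `M` is weaker than `B` and a transformation-effect `P ↦ P'`
(with `⟨P'⟩ ⊑ ⟨P⟩`) is unsafe under `M` but safe under `B`, then there is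
`E' ∈ ⟦P'⟧_M` inconsistent under `B` such that every `E ∈ ⟨P⟩` comparable to
`E'` is inconsistent under `M` (and hence under `B`). -/
theorem unsafe_witness_of_weaker {Exec PreTrace : Type}
    (cand : PreTrace → Set Exec) (sim : Exec → Exec → Prop)
    (hsym : ∀ E E' : Exec, sim E E' → sim E' E)
    (B M : Set (Exec → Prop))
    (hweak : ∀ E : Exec, consistent B E → consistent M E)
    (P P' : PreTrace)
    (hcont : contained sim (cand P') (cand P))
    (hunsafeM : ¬ safeU cand sim M P P')
    (hsafeB : safeU cand sim B P P') :
    ∃ E' ∈ cand P', consistent M E' ∧ ¬ consistent B E' ∧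
      ∀ E ∈ cand P, sim E E' → ¬ consistent M E ∧ ¬ consistent B E := by
  simp only [safeU, contained, not_forall] at hunsafeM
  obtain ⟨E', hE', hno⟩ := hunsafeM
  obtain ⟨hE'c, hE'M⟩ := hE'
  push_neg at hno
  refine ⟨E', hE'c, hE'M, ?_, ?_⟩
  · intro hB
    obtain ⟨E, ⟨hEc, hEB⟩, hsim⟩ := hsafeB E' ⟨hE'c, hB⟩
    exact hno E ⟨hEc, hweak E hEB⟩ hsim
  · intro E hEc hsim
    have hM : ¬ consistent M E := fun h => hno E ⟨hEc, h⟩ (hsym E E' hsim)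
    exact ⟨hM, fun h => hM (hweak E h)⟩
end

section
/- In any execution with an rb;mo;rfe;[r_y];po;[f];po;[r_x] cycle where f is a fence and r_x, r_y are reads, if r_y is immediately po-adjacent to another read r_z before the fence (or r_z immediately precedes r_x after the fence), then swapping the adjacent reads' po edge preserves the existence of an rb;mo;rfe;po;[f];po cycle. Hence the fence axiom a_frr is stable under adjacent read-read reordering of reads on the same side of the fence. -/
/-- Happens-before: transitive closure of `po ∪ rf`. -/
def hbR {Event : Type} (po rf : Event → Event → Prop) : Event → Event → Prop :=
  Relation.TransGen (fun a b => po a b ∨ rf a b)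

/-- Left sequential composition of two relations. -/
def compR {Event : Type} (r s : Event → Event → Prop) : Event → Event → Prop :=
  fun a c => ∃ b, r a b ∧ s b c

/-- Reads-before: `rf⁻¹ ; mo_loc`. -/
def rbR {Event Loc : Type} (rf mo : Event → Event → Prop) (loc : Event → Loc) :
    Event → Event → Prop :=
  fun r w => ∃ w0, rf w0 r ∧ mo w0 w ∧ loc w0 = loc w

/-- External reads-from: rf between events of different threads. -/
def rfeR {Event Tid : Type} (rf : Event → Event → Prop) (tid : Event → Tid) :
    Event → Event → Prop :=
  fun a b => rf a b ∧ tid a ≠ tid b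

/-- The relation `a_rr = rb ; mo? ; hb? ; rfe ; [r_loc] ; hb ; [r_!loc]`. -/
def arrR {Event Loc Tid : Type} (isRead : Event → Prop) (loc : Event → Loc)
    (tid : Event → Tid) (po rf mo : Event → Event → Prop) :
    Event → Event → Prop :=
  fun a b => ∃ w1 w2 e r1,
    rbR rf mo loc a w1 ∧ (w1 = w2 ∨ mo w1 w2) ∧ (w2 = e ∨ hbR po rf w2 e) ∧
    rfeR rf tid e r1 ∧ isRead r1 ∧ hbR po rf r1 b ∧ isRead b ∧ loc r1 ≠ loc b

/-- `po_imm`: immediately adjacent in program order. -/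
def poImmR {Event : Type} (po : Event → Event → Prop) (a b : Event) : Prop :=
  po a b ∧ ¬ ∃ c, po a c ∧ po c b

/-- In any execution with an `rb;mo;rfe;[r_y];po;[f];po;[r_x]` cycle (`f` a
fence, `r_x, r_y` reads), if a read `r_z` is immediately po-adjacent after
`r_y` before the fence, or immediately po-before `r_x` after the fence, then
swapping that adjacent pair's po edge preserves the existence of an
`rb;mo;rfe;[read];po;[fence];po;[read]` cycle: the fence axiom `a_frr` is
stable under adjacent read-read reordering on the same side of the fence. -/
theorem frr_cycle_stable_under_adjacent_read_reordering {Event Loc Tid : Type}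
    (isRead isFence : Event → Prop) (loc : Event → Loc) (tid : Event → Tid)
    (po rf mo : Event → Event → Prop)
    (f rx ry rz : Event) (w1 w2 : Event)
    (hf : isFence f) (hrx : isRead rx) (hry : isRead ry) (hrz : isRead rz)
    -- the rb;mo;rfe;[r_y];po;[f];po;[r_x] cycle:
    (hrb : rbR rf mo loc rx w1) (hmo : mo w1 w2) (hrfe : rfeR rf tid w2 ry)
    (hpo1 : po ry f) (hpo2 : po f rx)
    -- the swapped adjacent pair (p, q), lying on one side of the fence:
    (p q : Event)
    (hside : (p = ry ∧ q = rz ∧ po rz f) ∨ (p = rz ∧ q = rx ∧ po f rz))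
    (himm : poImmR po p q) (hlocpq : loc p ≠ loc q) :
    ∃ f' rx' ry' w1' w2',
      isFence f' ∧ isRead rx' ∧ isRead ry' ∧
      rbR rf mo loc rx' w1' ∧ mo w1' w2' ∧ rfeR rf tid w2' ry' ∧
      (fun a b => (po a b ∧ ¬ (a = p ∧ b = q)) ∨ (a = q ∧ b = p)) ry' f' ∧
      (fun a b => (po a b ∧ ¬ (a = p ∧ b = q)) ∨ (a = q ∧ b = p)) f' rx' := by
  obtain ⟨hpq, himm2⟩ := himm
  refine ⟨f, rx, ry, w1, w2, hf, hrx, hry, hrb, hmo, hrfe, ?_, ?_⟩ <;>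
    rcases hside with ⟨rfl, rfl, hzf⟩ | ⟨rfl, rfl, hfz⟩
  · refine Or.inl ⟨hpo1, ?_⟩
    rintro ⟨-, h2⟩
    exact himm2 ⟨q, hpq, h2 ▸ hzf⟩
  · refine Or.inl ⟨hpo1, ?_⟩
    rintro ⟨h1, h2⟩
    exact himm2 ⟨f, h1 ▸ hpo1, hpo2⟩
  · refine Or.inl ⟨hpo2, ?_⟩
    rintro ⟨h1, h2⟩
    exact himm2 ⟨f, hpo1, h2 ▸ hpo2⟩
  · refine Or.inl ⟨hpo2, ?_⟩
    rintro ⟨h1, -⟩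
    exact himm2 ⟨p, h1 ▸ hfz, hpq⟩
end
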